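/- (Local Brezis–Lieb lemma, second form.) Let r ∈ (1,∞) and q ∈ [1, r]. If (w_n) is a sequence bounded in L^r(ℝ^N) that converges almost everywhere to w, then lim_{n→∞} ∫_{ℝ^N} | |w_n|^{q−1} w_n − |w_n − w|^{q−1} (w_n − w) − |w|^{q−1} w |^{r/q} dx = 0. -/

import Mathlib

/-!
The map `φ t = |t| ^ (q - 1) * t` is continuous and positively homogeneous of degree `q`. When
`|b| ≪ |a|` this makes `φ (a + b) - φ a` small relative to `|a| ^ q`, and otherwise `|a| ≲ |b|`, so
for every `ε > 0` there is `D` with `|φ a - φ (a - c) - φ c| ^ (r / q) ≤ ε |a| ^ r + D |c| ^ r`.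
With `a = wₙ x`, `c = w x`, the excess of the integrand over `ε |wₙ| ^ r` is dominated by
`D |w| ^ r`, integrable by Fatou, and tends to `0` a.e.; by dominated convergence the integrals
are eventually at most `ε sup ∫ |wₙ| ^ r` plus an arbitrarily small term.
-/

open MeasureTheory Real Filter Topology ENNReal

noncomputable section

abbrev Sp (N : ℕ) := EuclideanSpace ℝ (Fin N)

theorem Real.add_rpow_le_two_rpow_mul_rpow_add_rpow {p a b : ℝ} (hp : 0 ≤ p) (ha : 0 ≤ a)
    (hb : 0 ≤ b) : (a + b) ^ p ≤ 2 ^ p * (a ^ p + b ^ p) := calc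
  (a + b) ^ p ≤ (2 * max a b) ^ p := by rw [two_mul]; gcongr <;> simp
  _ = 2 ^ p * max a b ^ p := Real.mul_rpow zero_le_two (le_max_of_le_left ha)
  _ ≤ 2 ^ p * (a ^ p + b ^ p) := by
    gcongr
    rcases max_cases a b with ⟨h, -⟩ | ⟨h, -⟩ <;> rw [h]
    · exact le_add_of_nonneg_right (by positivity)
    · exact le_add_of_nonneg_left (by positivity)

def signedRpow (q t : ℝ) : ℝ := |t| ^ (q - 1) * t

section signedRpow

variable {q : ℝ}

@[simp]
theorem signedRpow_zero (q : ℝ) : signedRpow q 0 = 0 := by simp [signedRpow]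

theorem abs_signedRpow (hq : q ≠ 0) (t : ℝ) : |signedRpow q t| = |t| ^ q := by
  rcases eq_or_ne t 0 with rfl | ht
  · simp [Real.zero_rpow hq]
  · rw [signedRpow, abs_mul, abs_of_nonneg (by positivity), ← Real.rpow_add_one (abs_ne_zero.2 ht),
      sub_add_cancel]

theorem signedRpow_mul {s : ℝ} (hs : 0 < s) (t : ℝ) :
    signedRpow q (s * t) = s ^ q * signedRpow q t := by
  rw [signedRpow, signedRpow, abs_mul, abs_of_pos hs, Real.mul_rpow hs.le (abs_nonneg t),
    Real.rpow_sub_one hs.ne']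
  field_simp

theorem continuous_signedRpow (hq : 0 < q) : Continuous (signedRpow q) := by
  refine continuous_iff_continuousAt.2 fun t => ?_
  rcases eq_or_ne t 0 with rfl | ht
  · rw [ContinuousAt, signedRpow_zero, tendsto_zero_iff_norm_tendsto_zero]
    simp_rw [Real.norm_eq_abs, abs_signedRpow hq.ne']
    simpa [Real.zero_rpow hq.ne'] using
      (continuous_abs.rpow_const fun _ => Or.inr hq.le).tendsto 0
  · exact (continuous_abs.continuousAt.rpow_const (Or.inl (abs_ne_zero.2 ht))).mul
      continuousAt_id

theorem abs_signedRpow_add_sub_le_of_mul_abs_le (hq : 0 < q) {δ a b : ℝ} (hδ : 0 < δ)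
    (hb : δ * |a| ≤ |b|) :
    |signedRpow q (a + b) - signedRpow q a| ≤ 2 * (δ⁻¹ + 1) ^ q * |b| ^ q := by
  have hab : |a| + |b| ≤ (δ⁻¹ + 1) * |b| := by
    rw [add_mul, one_mul, add_le_add_iff_right, inv_mul_eq_div, le_div_iff₀ hδ, mul_comm]
    exact hb
  have hpow : ∀ t, |t| ≤ |a| + |b| → |t| ^ q ≤ (δ⁻¹ + 1) ^ q * |b| ^ q := fun t ht => by
    rw [← Real.mul_rpow (by positivity) (abs_nonneg b)]
    exact Real.rpow_le_rpow (abs_nonneg t) (ht.trans hab) hq.le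
  calc |signedRpow q (a + b) - signedRpow q a|
      ≤ |signedRpow q (a + b)| + |signedRpow q a| := abs_sub _ _
    _ = |a + b| ^ q + |a| ^ q := by rw [abs_signedRpow hq.ne', abs_signedRpow hq.ne']
    _ ≤ (δ⁻¹ + 1) ^ q * |b| ^ q + (δ⁻¹ + 1) ^ q * |b| ^ q :=
      add_le_add (hpow _ (abs_add_le a b)) (hpow _ (le_add_of_nonneg_right (abs_nonneg b)))
    _ = 2 * (δ⁻¹ + 1) ^ q * |b| ^ q := by ring

theorem exists_abs_signedRpow_add_sub_le (hq : 0 < q) {ε : ℝ} (hε : 0 < ε) :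
    ∃ C, ∀ a b : ℝ, |signedRpow q (a + b) - signedRpow q a| ≤ ε * |a| ^ q + C * |b| ^ q := by
  obtain ⟨δ, hδ, hφδ⟩ := Metric.uniformContinuousOn_iff.1
    ((isCompact_closedBall (0 : ℝ) 2).uniformContinuousOn_of_continuous
      (continuous_signedRpow hq).continuousOn) ε hε
  set δ' := min δ 1
  have hδ' : 0 < δ' := lt_min hδ one_pos
  refine ⟨2 * (δ'⁻¹ + 1) ^ q, fun a b => ?_⟩
  rcases lt_or_ge |b| (δ' * |a|) with hb | hb
  · have ha : 0 < |a| := pos_of_mul_pos_right ((abs_nonneg b).trans_lt hb) hδ'.le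
    set u := a / |a|
    set v := b / |a|
    have hu : |u| = 1 := by rw [abs_div, abs_abs, div_self ha.ne']
    have hv : |v| < δ' := by rwa [abs_div, abs_abs, div_lt_iff₀ ha]
    have hvδ : |v| < δ := hv.trans_le (min_le_left _ _)
    have hv1 : |v| ≤ 1 := hv.le.trans (min_le_right _ _)
    -- homogeneity reduces the estimate to the uniform continuity of `signedRpow q` near `±1`
    have hscale : signedRpow q (a + b) - signedRpow q a
        = |a| ^ q * (signedRpow q (u + v) - signedRpow q u) := by
      rw [mul_sub, ← signedRpow_mul ha, ← signedRpow_mul ha, mul_add, mul_div_cancel₀ _ ha.ne',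
        mul_div_cancel₀ _ ha.ne']
    have hclose : |signedRpow q (u + v) - signedRpow q u| < ε := by
      refine hφδ (u + v) ?_ u ?_ ?_
      · simp only [Metric.mem_closedBall, dist_zero_right, Real.norm_eq_abs]
        linarith [abs_add_le u v]
      · simp [hu]
      · simpa [Real.dist_eq] using hvδ
    calc |signedRpow q (a + b) - signedRpow q a|
        = |a| ^ q * |signedRpow q (u + v) - signedRpow q u| := by
          rw [hscale, abs_mul, abs_of_nonneg (by positivity)]
      _ ≤ ε * |a| ^ q := by rw [mul_comm]; gcongr
      _ ≤ ε * |a| ^ q + 2 * (δ'⁻¹ + 1) ^ q * |b| ^ q := le_add_of_nonneg_right (by positivity)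
  · calc |signedRpow q (a + b) - signedRpow q a| ≤ 2 * (δ'⁻¹ + 1) ^ q * |b| ^ q :=
          abs_signedRpow_add_sub_le_of_mul_abs_le hq hδ' hb
      _ ≤ ε * |a| ^ q + 2 * (δ'⁻¹ + 1) ^ q * |b| ^ q := le_add_of_nonneg_left (by positivity)

theorem exists_abs_signedRpow_sub_sub_rpow_le {r : ℝ} (hq : 0 < q) (hr : 0 < r) {ε : ℝ}
    (hε : 0 < ε) : ∃ D, ∀ a c : ℝ,
      |signedRpow q a - signedRpow q (a - c) - signedRpow q c| ^ (r / q)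
        ≤ ε * |a| ^ r + D * |c| ^ r := by
  set p := r / q
  have hp : 0 < p := div_pos hr hq
  set ε₁ := (ε / 2 ^ p) ^ p⁻¹
  obtain ⟨C, hC⟩ := exists_abs_signedRpow_add_sub_le hq (ε := ε₁) (by positivity)
  have hC0 : 0 ≤ C := by
    simpa [abs_signedRpow hq.ne', Real.zero_rpow hq.ne'] using (abs_nonneg _).trans (hC 0 1)
  refine ⟨2 ^ p * (C + 1) ^ p, fun a c => ?_⟩
  have hpow : ∀ {s t : ℝ}, 0 ≤ s → (s * |t| ^ q) ^ p = s ^ p * |t| ^ r := fun hs => by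
    rw [Real.mul_rpow hs (by positivity), ← Real.rpow_mul (abs_nonneg _), mul_div_cancel₀ _ hq.ne']
  have hε₁ : ε₁ ^ p = ε / 2 ^ p := Real.rpow_inv_rpow (by positivity) hp.ne'
  have hsum : |signedRpow q a - signedRpow q (a - c) - signedRpow q c|
      ≤ ε₁ * |a| ^ q + (C + 1) * |c| ^ q := by
    have h := hC a (-c)
    rw [← sub_eq_add_neg, abs_neg, abs_sub_comm] at h
    calc _ ≤ |signedRpow q a - signedRpow q (a - c)| + |signedRpow q c| := abs_sub _ _
      _ ≤ (ε₁ * |a| ^ q + C * |c| ^ q) + |c| ^ q := by rw [abs_signedRpow hq.ne']; gcongr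
      _ = ε₁ * |a| ^ q + (C + 1) * |c| ^ q := by ring
  calc _ ≤ (ε₁ * |a| ^ q + (C + 1) * |c| ^ q) ^ p := by gcongr
    _ ≤ 2 ^ p * ((ε₁ * |a| ^ q) ^ p + ((C + 1) * |c| ^ q) ^ p) :=
      Real.add_rpow_le_two_rpow_mul_rpow_add_rpow hp.le (by positivity) (by positivity)
    _ = ε * |a| ^ r + 2 ^ p * (C + 1) ^ p * |c| ^ r := by
      rw [hpow (by positivity), hpow (by positivity), hε₁]
      field_simp

theorem tendsto_abs_signedRpow_sub_sub_rpow {ι : Type*} {l : Filter ι} {p : ℝ} (hq : 0 < q)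
    (hp : 0 < p) {a : ι → ℝ} {c : ℝ} (ha : Tendsto a l (𝓝 c)) :
    Tendsto (fun i => |signedRpow q (a i) - signedRpow q (a i - c) - signedRpow q c| ^ p) l
      (𝓝 0) := by
  have hφ := continuous_signedRpow hq
  have h := ((hφ.tendsto c).comp ha).sub ((hφ.tendsto 0).comp (tendsto_sub_nhds_zero_iff.2 ha))
    |>.sub_const (signedRpow q c) |>.abs |>.rpow_const (Or.inr hp.le)
  simpa [Function.comp_def, Real.zero_rpow hp.ne'] using h

end signedRpow

section BrezisLieb

variable {α : Type*} [MeasurableSpace α] {μ : Measure α}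

theorem tendsto_integral_zero_of_le_mul_add {F G : ℕ → α → ℝ} {K : ℝ}
    (hFm : ∀ n, AEStronglyMeasurable (F n) μ) (hF0 : ∀ n x, 0 ≤ F n x)
    (hFlim : ∀ᵐ x ∂μ, Tendsto (fun n => F n x) atTop (𝓝 0))
    (hG : ∀ n, Integrable (G n) μ) (hG0 : ∀ n x, 0 ≤ G n x) (hGK : ∀ n, ∫ x, G n x ∂μ ≤ K)
    (hdom : ∀ ε > 0, ∃ h : α → ℝ, Integrable h μ ∧ ∀ n x, F n x ≤ ε * G n x + h x) :
    Tendsto (fun n => ∫ x, F n x ∂μ) atTop (𝓝 0) := by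
  refine tendsto_order.2 ⟨fun a ha => .of_forall fun n => ha.trans_le (integral_nonneg (hF0 n)),
    fun b hb => ?_⟩
  have hK : 0 ≤ K := (integral_nonneg (hG0 0)).trans (hGK 0)
  set ε := b / (2 * (K + 1))
  have hε : 0 < ε := by positivity
  obtain ⟨h, hh, hFh⟩ := hdom ε hε
  -- the part of `F n` not controlled by `ε * G n` is dominated by `h` and tends to `0`
  set H : ℕ → α → ℝ := fun n x => max (F n x - ε * G n x) 0
  have hHm : ∀ n, AEStronglyMeasurable (H n) μ := fun n =>
    ((hFm n).sub ((hG n).1.const_mul ε)).sup aestronglyMeasurable_const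
  have hH_le : ∀ n x, ‖H n x‖ ≤ |h x| := fun n x => by
    rw [Real.norm_eq_abs, abs_of_nonneg (le_max_right _ _)]
    exact max_le (by linarith [hFh n x, le_abs_self (h x)]) (abs_nonneg _)
  have hH_int : ∀ n, Integrable (H n) μ := fun n => hh.abs.mono' (hHm n) (.of_forall (hH_le n))
  have hH_lim : Tendsto (fun n => ∫ x, H n x ∂μ) atTop (𝓝 0) := by
    refine integral_zero (α := α) ℝ ▸ tendsto_integral_of_dominated_convergence _ hHm hh.abs
      (fun n => .of_forall (hH_le n)) ?_
    filter_upwards [hFlim] with x hx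
    refine tendsto_of_tendsto_of_tendsto_of_le_of_le tendsto_const_nhds hx
      (fun n => le_max_right _ _) fun n => max_le ?_ (hF0 n x)
    linarith [mul_nonneg hε.le (hG0 n x)]
  have hF_le : ∀ n, ∫ x, F n x ∂μ ≤ ∫ x, H n x ∂μ + ε * K := fun n => calc
    ∫ x, F n x ∂μ ≤ ∫ x, (H n x + ε * G n x) ∂μ :=
      integral_mono_of_nonneg (.of_forall (hF0 n)) ((hH_int n).add ((hG n).const_mul ε))
        (.of_forall fun x => by linarith [le_max_left (F n x - ε * G n x) 0])
    _ ≤ ∫ x, H n x ∂μ + ε * K := by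
      rw [integral_add (hH_int n) ((hG n).const_mul ε), integral_const_mul]
      gcongr
      exact hGK n
  have hεK : ε * K < b / 2 := by
    rw [div_mul_eq_mul_div, div_lt_div_iff₀ (by positivity) two_pos]
    nlinarith
  filter_upwards [hH_lim.eventually (gt_mem_nhds (half_pos hb))] with n hn
  linarith [hF_le n]

theorem integral_abs_rpow_le_of_eLpNorm_le {f : α → ℝ} {r : ℝ} {C : ℝ≥0∞} (hr : 0 < r)
    (hf : AEStronglyMeasurable f μ) (hC : C ≠ ⊤) (hfC : eLpNorm f (.ofReal r) μ ≤ C) :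
    ∫ x, |f x| ^ r ∂μ ≤ C.toReal ^ r := by
  have hI : 0 ≤ ∫ x, |f x| ^ r ∂μ := integral_nonneg fun x => by positivity
  have hnorm : lpNorm f (.ofReal r) μ = (∫ x, |f x| ^ r ∂μ) ^ r⁻¹ := by
    simp [lpNorm_eq_integral_norm_rpow_toReal (ENNReal.ofReal_pos.2 hr).ne' ofReal_ne_top hf,
      ENNReal.toReal_ofReal hr.le]
  calc ∫ x, |f x| ^ r ∂μ = lpNorm f (.ofReal r) μ ^ r := by
        rw [hnorm, Real.rpow_inv_rpow hI hr.ne']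
    _ ≤ C.toReal ^ r := by
        rw [← toReal_eLpNorm hf]
        gcongr

theorem integrable_abs_rpow_of_eLpNorm_le {f : α → ℝ} {r : ℝ} {C : ℝ≥0∞} (hr : 0 < r)
    (hf : AEStronglyMeasurable f μ) (hC : C < ⊤) (hfC : eLpNorm f (.ofReal r) μ ≤ C) :
    Integrable (fun x => |f x| ^ r) μ := by
  simpa [ENNReal.toReal_ofReal hr.le] using
    (MemLp.integrable_norm_rpow ⟨hf, hfC.trans_lt hC⟩ (ENNReal.ofReal_pos.2 hr).ne' ofReal_ne_top)

end BrezisLieb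

theorem local_brezis_lieb_second_general
    (N : ℕ) (r q : ℝ) (hr1 : 1 < r) (hq1 : 1 ≤ q)
    (w : ℕ → Sp N → ℝ) (wlim : Sp N → ℝ)
    (hmeas : ∀ n, AEStronglyMeasurable (w n) (volume : Measure (Sp N)))
    (hbdd : ∃ C : ℝ≥0∞, C < ⊤ ∧ ∀ n, eLpNorm (w n) (ENNReal.ofReal r) volume ≤ C)
    (hae : ∀ᵐ x ∂(volume : Measure (Sp N)), Tendsto (fun n => w n x) atTop (nhds (wlim x))) :
    Tendsto
      (fun n => ∫ x,
        |(|w n x| ^ (q - 1) * w n x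
          - |w n x - wlim x| ^ (q - 1) * (w n x - wlim x)
          - |wlim x| ^ (q - 1) * wlim x)| ^ (r / q))
      atTop (nhds 0) := by
  obtain ⟨C, hC, hwC⟩ := hbdd
  have hr : 0 < r := by linarith
  have hq : 0 < q := by linarith
  have hφ : Continuous (signedRpow q) := continuous_signedRpow hq
  have hwlim : AEStronglyMeasurable wlim volume := aestronglyMeasurable_of_tendsto_ae _ hmeas hae
  have hwlimC : eLpNorm wlim (.ofReal r) volume ≤ C :=
    Lp.eLpNorm_le_of_ae_tendsto (.of_forall hwC) hmeas hae
  simp only [← signedRpow.eq_1]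
  refine tendsto_integral_zero_of_le_mul_add (G := fun n x => |w n x| ^ r) (K := C.toReal ^ r)
    (fun n => by fun_prop (disch := positivity)) (fun n x => by positivity) ?_
    (fun n => integrable_abs_rpow_of_eLpNorm_le hr (hmeas n) hC (hwC n)) (fun n x => by positivity)
    (fun n => integral_abs_rpow_le_of_eLpNorm_le hr (hmeas n) hC.ne (hwC n)) fun ε hε => ?_
  · filter_upwards [hae] with x hx
    exact tendsto_abs_signedRpow_sub_sub_rpow hq (div_pos hr hq) hx
  · obtain ⟨D, hD⟩ := exists_abs_signedRpow_sub_sub_rpow_le hq hr hε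
    exact ⟨fun x => D * |wlim x| ^ r,
      (integrable_abs_rpow_of_eLpNorm_le hr hwlim hC hwlimC).const_mul D,
      fun n x => hD (w n x) (wlim x)⟩

/-- Local Brezis–Lieb lemma, second form. -/
theorem local_brezis_lieb_second
    (N : ℕ) (hN : 1 ≤ N) (r q : ℝ) (hr1 : 1 < r) (hq1 : 1 ≤ q) (hqr : q ≤ r)
    (w : ℕ → Sp N → ℝ) (wlim : Sp N → ℝ)
    (hmeas : ∀ n, AEStronglyMeasurable (w n) (volume : Measure (Sp N)))
    (hbdd : ∃ C : ℝ≥0∞, C < ⊤ ∧ ∀ n, eLpNorm (w n) (ENNReal.ofReal r) volume ≤ C)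
    (hae : ∀ᵐ x ∂(volume : Measure (Sp N)), Tendsto (fun n => w n x) atTop (nhds (wlim x))) :
    Tendsto
      (fun n => ∫ x,
        |(|w n x| ^ (q - 1) * w n x
          - |w n x - wlim x| ^ (q - 1) * (w n x - wlim x)
          - |wlim x| ^ (q - 1) * wlim x)| ^ (r / q))
      atTop (nhds 0) :=
  local_brezis_lieb_second_general N r q hr1 hq1 w wlim hmeas hbdd hae
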